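/- If a permutation π of [n] has at least one alignment, then it has a simple alignment, i.e., an alignment (i, j) = (π(a), π(b)) where a and b are cyclically consecutive (b = a - 1 mod n, with arrows from a to π(a) and b to π(b) non-crossing). -/
import Mathlib


open Finset

variable {n : ℕ} [NeZero n]

/-- Position of `x` in the cyclic order on `Fin n` starting at `i`. -/
def cpos (i x : Fin n) : ℕ := ((x - i : Fin n) : ℕ)

/-- `X ≪_i Y`: every element of `X \\ Y` precedes every element of `Y \\ X`
in the cyclic order starting at `i`. -/
def Ll (i : Fin n) (X Y : Finset (Fin n)) : Prop :=
  ∀ x ∈ X \ Y, ∀ y ∈ Y \ X, cpos i x < cpos i y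

/-- `X` and `Y` are weakly separated. -/
def WSep (X Y : Finset (Fin n)) : Prop := ∃ i : Fin n, Ll i X Y

/-- `(i, j)` is an alignment of `π`: the quadruple `π⁻¹(i), i, j, π⁻¹(j)`
occurs in this cyclic order (`j = π(j)` allowed, `i = π(i)` not). -/
def IsAlignment (π : Equiv.Perm (Fin n)) (i j : Fin n) : Prop :=
  0 < cpos (π.symm i) i ∧
  cpos (π.symm i) i < cpos (π.symm i) j ∧
  cpos (π.symm i) j ≤ cpos (π.symm i) (π.symm j)

omit [NeZero n] in
lemma cpos_lt' (a x : Fin n) : cpos a x < n := (x - a).isLt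

lemma cpos_spec (a x : Fin n) :
    cpos a x + a.val = x.val ∨ cpos a x + a.val = x.val + n := by
  have h : x - a + a = x := sub_add_cancel x a
  have h2 : ((x - a).val + a.val) % n = x.val := by
    rw [← Fin.val_add, h]
  have h3 : (x - a).val < n := (x - a).isLt
  have h4 : a.val < n := a.isLt
  unfold cpos
  rcases Nat.lt_or_ge ((x - a).val + a.val) n with hl | hl
  · left; rwa [Nat.mod_eq_of_lt hl] at h2
  · right
    rw [Nat.mod_eq_sub_mod hl, Nat.mod_eq_of_lt (by omega)] at h2
    omega

lemma sub_one_spec (hn : 2 ≤ n) (a : Fin n) :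
    ((a - 1 : Fin n) : ℕ) + 1 = a.val ∨ ((a - 1 : Fin n) : ℕ) + 1 = a.val + n := by
  have h1 : (1 : Fin n).val = 1 := by rw [Fin.val_one']; exact Nat.mod_eq_of_lt hn
  have := cpos_spec (1 : Fin n) a
  unfold cpos at this
  rwa [h1] at this

/-- If `π` has an alignment, then it has a simple alignment, i.e. one with
`π⁻¹(i)` and `π⁻¹(j)` cyclically consecutive (`π⁻¹(j) = π⁻¹(i) - 1`). -/
theorem exists_simple_alignment (π : Equiv.Perm (Fin n))
    (h : ∃ i j : Fin n, IsAlignment π i j) :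
    ∃ i j : Fin n, IsAlignment π i j ∧ π.symm i = π.symm j + 1 := by
  obtain ⟨i0, j0, hij0⟩ := h
  suffices H : ∀ d (i j : Fin n), IsAlignment π i j → cpos (π.symm j) (π.symm i) ≤ d →
      ∃ i j, IsAlignment π i j ∧ π.symm i = π.symm j + 1 from
    H _ i0 j0 hij0 le_rfl
  intro d
  induction d with
  | zero =>
    intro i j hij hd
    exfalso
    obtain ⟨h1, h2, h3⟩ := hij
    have s1 := cpos_spec (π.symm j) (π.symm i)
    have s3 := cpos_spec (π.symm i) (π.symm j)
    have hA := (π.symm i).isLt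
    have hB := (π.symm j).isLt
    have l1 := cpos_lt' (π.symm i) j
    have l2 := cpos_lt' (π.symm i) (π.symm j)
    omega
  | succ d ih =>
    intro i j hij hd
    rcases Nat.lt_or_ge (cpos (π.symm j) (π.symm i)) (d + 1) with h' | h'
    · exact ih i j hij (by omega)
    have hda : cpos (π.symm j) (π.symm i) = d + 1 := le_antisymm hd h'
    obtain ⟨h1, h2, h3⟩ := hij
    set a := π.symm i with ha
    set b := π.symm j with hb
    have hn3 : 3 ≤ n := by have := cpos_lt' a j; omega
    have hn2 : 2 ≤ n := by omega
    have hA := a.isLt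
    have hB := b.isLt
    rcases Nat.eq_zero_or_pos d with rfl | hd1
    · -- cpos b a = 1, so a = b + 1 : the alignment is already simple
      refine ⟨i, j, ⟨h1, h2, h3⟩, ?_⟩
      have hv1 : (1 : Fin n).val = 1 := by
        rw [Fin.val_one']; exact Nat.mod_eq_of_lt hn2
      have hab : a - b = 1 := by
        apply Fin.ext
        rw [hv1]
        exact hda
      rw [← ha, ← hb]
      have : a = 1 + b := sub_eq_iff_eq_add.mp hab
      rw [this, add_comm]
    · set c := a - 1 with hc
      set k := π c with hk
      have hsk : π.symm k = c := π.symm_apply_apply c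
      have hC := c.isLt
      have s1a := sub_one_spec hn2 a
      rw [← hc] at s1a
      have sca := cpos_spec a c
      have sba := cpos_spec b a
      have sbc := cpos_spec b c
      have lac := cpos_lt' a c
      have lbc := cpos_lt' b c
      have lba := cpos_lt' b a
      have hcac : cpos a c = n - 1 := by omega
      have hcbc : cpos b c = d := by omega
      rcases Nat.lt_or_ge (cpos a i) (cpos a k) with hcase | hcase
      · -- (i, k) is a simple alignment
        refine ⟨i, k, ⟨?_, ?_, ?_⟩, ?_⟩
        · rw [← ha]; exact h1
        · rw [← ha]; exact hcase
        · rw [← ha, hsk]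
          have := cpos_lt' a k; omega
        · rw [← ha, hsk, hc, sub_add_cancel]
      · -- (k, j) is an alignment with smaller distance
        have sak := cpos_spec a k
        have sck := cpos_spec c k
        have saj := cpos_spec a j
        have scj := cpos_spec c j
        have sab := cpos_spec a b
        have scb := cpos_spec c b
        have lak := cpos_lt' a k
        have lck := cpos_lt' c k
        have laj := cpos_lt' a j
        have lcj := cpos_lt' c j
        have lab := cpos_lt' a b
        have lcb := cpos_lt' c b
        have hK := k.isLt
        have hJ := j.isLt
        have hI := i.isLt
        have lai := cpos_lt' a i
        refine ih k j ⟨?_, ?_, ?_⟩ ?_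
        · rw [hsk]; omega
        · rw [hsk]; omega
        · rw [hsk, ← hb]; omega
        · rw [hsk, ← hb]; omega
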